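/- arXiv:2604.27160 — 5 statements merged into one kernel-verified Lean document; each statement's English description precedes it below -/
import Mathlib

section
/- Let C > 0 and let γ : 𝒰 → [0,∞) satisfy Σ_{v ∈ 𝒰} C^{2|v|} γ_v < ∞. Define γ↑ by γ↑_u := Σ_{v ∈ 𝒰, u ⊆ v} C^{2|v|} γ_v. Then for every u ∈ 𝒰 the limit lim_{s → ∞} (Δ_{[s] ∖ u} γ↑)_u exists and C^{−2|u|} lim_{s → ∞} (Δ_{[s] ∖ u} γ↑)_u = γ_u. -/
/-!
Write `g v := C^(2|v|) γ_v`, so that `γ↑_u = Σ_{t ⊇ u} g_t`. Exchanging the finite alternating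
sum with the series, `(Δ_V γ↑)_u = Σ_{t ⊇ u} g_t Σ_{w ⊆ V ∩ t} (-1)^{|w|}`, and the inner sum is
the indicator of `V ∩ t = ∅`. Hence `(Δ_{[s] ∖ u} γ↑)_u` sums `g_t` over the `t ⊇ u` that avoid
`[s] ∖ u`; once `[s]` contains `t`, only `t = u` survives, and dominated convergence by `|g|`
gives the limit `g_u = C^(2|u|) γ_u`.
-/

open Finset Filter Topology

/-- The difference operator `Δ_v` on families indexed by finite subsets of `ℕ`:
`(Δ_v γ)_u := Σ_{w ⊆ v} (−1)^{|w|} γ_{u ∪ w}`. -/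
noncomputable def Δ (v : Finset ℕ) (γ : Finset ℕ → ℝ) (u : Finset ℕ) : ℝ :=
  ∑ w ∈ v.powerset, (-1 : ℝ) ^ w.card * γ (u ∪ w)

/-- `γ↑` of the paper is `upperSum` of `v ↦ C^(2|v|) γ_v`. -/
noncomputable def upperSum (g : Finset ℕ → ℝ) (u : Finset ℕ) : ℝ :=
  ∑' v, if u ⊆ v then g v else 0

lemma sum_powerset_filter_subset_neg_one_pow_card {α R : Type*} [DecidableEq α] [Ring R]
    (V t : Finset α) :
    ∑ w ∈ V.powerset with w ⊆ t, (-1 : R) ^ w.card = if Disjoint V t then 1 else 0 := by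
  have hfilter : {w ∈ V.powerset | w ⊆ t} = (V ∩ t).powerset := by
    ext w; simp only [mem_filter, mem_powerset, subset_inter_iff]
  have := congrArg (Int.cast : ℤ → R) (sum_powerset_neg_one_pow_card (x := V ∩ t))
  push_cast at this
  rw [hfilter, this]
  exact if_congr disjoint_iff_inter_eq_empty.symm rfl rfl

lemma sum_powerset_neg_one_pow_mul_ite_union_subset {α R : Type*} [DecidableEq α] [Ring R]
    (V u t : Finset α) (x : R) :
    ∑ w ∈ V.powerset, (-1 : R) ^ w.card * (if u ∪ w ⊆ t then x else 0) =
      if u ⊆ t ∧ Disjoint V t then x else 0 := by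
  by_cases hut : u ⊆ t
  · simp only [union_subset_iff, hut, true_and, mul_ite, mul_zero]
    rw [← sum_filter, ← sum_mul, sum_powerset_filter_subset_neg_one_pow_card]
    split_ifs <;> simp
  · simp [union_subset_iff, hut]

lemma Δ_upperSum {g : Finset ℕ → ℝ} (hg : Summable g) (V u : Finset ℕ) :
    Δ V (upperSum g) u = ∑' t, if u ⊆ t ∧ Disjoint V t then g t else 0 := by
  have hsummable (w : Finset ℕ) :
      Summable fun t => (-1 : ℝ) ^ w.card * if u ∪ w ⊆ t then g t else 0 :=
    Summable.mul_left _ <| hg.abs.of_norm_bounded fun t => by split_ifs <;> simp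
  simp_rw [Δ, upperSum, ← tsum_mul_left]
  rw [← Summable.tsum_finsetSum fun w _ => hsummable w]
  simp_rw [sum_powerset_neg_one_pow_mul_ite_union_subset]

lemma eventually_subset_and_disjoint_range_sdiff_iff (u t : Finset ℕ) :
    ∀ᶠ s in atTop, (u ⊆ t ∧ Disjoint (range s \ u) t ↔ t = u) := by
  obtain ⟨n, hn⟩ := t.exists_nat_subset_range
  filter_upwards [eventually_ge_atTop n] with s hs
  have ht : t \ u ≤ range s := sdiff_subset.trans (hn.trans (range_subset_range.2 hs))
  rw [disjoint_sdiff_comm, disjoint_comm, disjoint_of_le_iff_left_eq_bot ht, bot_eq_empty,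
    sdiff_eq_empty_iff_subset, and_comm, ← subset_antisymm_iff]

lemma tendsto_Δ_range_sdiff_upperSum {g : Finset ℕ → ℝ} (hg : Summable g) (u : Finset ℕ) :
    Tendsto (fun s => Δ (range s \ u) (upperSum g) u) atTop (𝓝 (g u)) := by
  simp_rw [Δ_upperSum hg]
  rw [← tsum_ite_eq u fun _ => g u]
  refine tendsto_tsum_of_dominated_convergence hg.abs (fun t => ?_) (.of_forall fun s t => ?_)
  · refine tendsto_const_nhds.congr' ?_
    filter_upwards [eventually_subset_and_disjoint_range_sdiff_iff u t] with s hs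
    simp only [hs]
    split_ifs with h <;> simp [h]
  · split_ifs <;> simp

theorem stmt8_general (C : ℝ) (hC : 0 < C) (γ : Finset ℕ → ℝ)
    (hsum : Summable fun v : Finset ℕ => C ^ (2 * v.card) * γ v)
    (γup : Finset ℕ → ℝ)
    (hγup : ∀ u, γup u = ∑' v : Finset ℕ, if u ⊆ v then C ^ (2 * v.card) * γ v else 0)
    (u : Finset ℕ) :
    ∃ L : ℝ, Tendsto (fun s : ℕ => Δ (Finset.range s \ u) γup u) atTop (𝓝 L) ∧
      (C ^ (2 * u.card))⁻¹ * L = γ u := by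
  obtain rfl : γup = upperSum fun v => C ^ (2 * v.card) * γ v := funext hγup
  exact ⟨_, tendsto_Δ_range_sdiff_upperSum hsum u, inv_mul_cancel_left₀ (by positivity) _⟩

theorem stmt8 (C : ℝ) (hC : 0 < C) (γ : Finset ℕ → ℝ) (hnn : ∀ u, 0 ≤ γ u)
    (hsum : Summable fun v : Finset ℕ => C ^ (2 * v.card) * γ v)
    (γup : Finset ℕ → ℝ)
    (hγup : ∀ u, γup u = ∑' v : Finset ℕ, if u ⊆ v then C ^ (2 * v.card) * γ v else 0)
    (u : Finset ℕ) :
    ∃ L : ℝ, Tendsto (fun s : ℕ => Δ (Finset.range s \ u) γup u) atTop (𝓝 L) ∧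
      (C ^ (2 * u.card))⁻¹ * L = γ u :=
  stmt8_general C hC γ hsum γup hγup u
end

section
/- With 𝒰, Δ, ℳ, 𝒩, 𝒜, 𝒫 and 𝒮_C as defined, for every C > 0 the following proper inclusions hold: 𝒫 ⊊ 𝒜 and {T↑ γ : γ ∈ 𝒮_C} = 𝒜 ⊊ 𝒩 ⊊ ℳ. Here: (a) the constant weights γ_u = c > 0 belong to ℳ ∖ 𝒩; (b) the product weights γ_u = Π_{j ∈ u} 1/j belong to 𝒩 ∖ 𝒜; (c) the weights γ with γ_u = s^{−2} for u = {1, …, s}, s ∈ ℕ, and γ_u = 0 otherwise, satisfy T↑ γ ∈ 𝒜 ∖ 𝒫. -/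
open Finset Filter Topology

/-- Completely monotone weights `ℳ`: all iterated differences are non-negative.
(Since `Δ_∅ γ = γ`, this includes non-negativity of `γ` itself.) -/
def CM (γ : Finset ℕ → ℝ) : Prop := ∀ v u : Finset ℕ, 0 ≤ Δ v γ u

/-- The class `𝒩`: completely monotone weights tending to `0` along the net
directed by `u ≤ v :⇔ max u ≤ max v`. -/
def Ncond (γ : Finset ℕ → ℝ) : Prop :=
  CM γ ∧ ∀ ε > (0 : ℝ), ∃ r : ℕ, ∀ u : Finset ℕ, r ≤ u.sup id → γ u < ε

/-- The class `𝒜`: completely monotone weights with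
`lim_r lim_s (Δ_{[s] ∖ [r]} γ)_u = γ_u` for every `u`. -/
def Acond (γ : Finset ℕ → ℝ) : Prop :=
  CM γ ∧ ∀ u : Finset ℕ, ∃ g : ℕ → ℝ,
    (∀ r : ℕ, Filter.Tendsto (fun s : ℕ => Δ (Finset.range s \ Finset.range r) γ u)
      Filter.atTop (nhds (g r))) ∧
    Filter.Tendsto g Filter.atTop (nhds (γ u))

/-- The class `𝒫`: summable completely monotone weights. -/
def Pcond (γ : Finset ℕ → ℝ) : Prop := CM γ ∧ Summable γ

/-- The class `𝒮_C` of weights with `Σ_v C^{2|v|} γ_v < ∞`. -/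
def SC (C : ℝ) (γ : Finset ℕ → ℝ) : Prop :=
  (∀ u, 0 ≤ γ u) ∧ Summable fun v : Finset ℕ => C ^ (2 * v.card) * γ v

/-!
For `u ⊆ R ⊆ S` every weight satisfies `(Δ_{S∖R} γ)_u = Σ_{u ⊆ v ⊆ R} (Δ_{S∖v} γ)_v`. For
completely monotone `γ` the limits `d_v = lim_s (Δ_{[s]∖v} γ)_v` exist, are non-negative, and
have sum at most `γ_∅`; letting `s → ∞` and then `r → ∞` in the identity with `S = [s]`,
`R = [r]` shows that `γ ∈ 𝒜` means exactly `γ_u = Σ_{v ⊇ u} d_v`, i.e. `γ = T↑δ` with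
`δ_v = C^{-2|v|} d_v`. Conversely `(Δ_v T↑γ)_u` is the sum of `C^{2|w|} γ_w` over the `w ⊇ u`
disjoint from `v`, and dominated convergence gives `T↑γ ∈ 𝒜`. A weight in `𝒜` lies in `𝒩`
since `γ_{{j}} ≤ γ_∅ - lim_s (Δ_{[s]∖[r]} γ)_∅` for `j ≥ r`. For the product weights the
differences factor, and `(Δ_{[s]∖[r]} γ)_∅ = r/s → 0 ≠ γ_∅`.
-/

section Difference

variable {γ : Finset ℕ → ℝ}

@[simp]
lemma delta_empty (γ : Finset ℕ → ℝ) (u : Finset ℕ) : Δ ∅ γ u = γ u := by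
  simp [Δ]

lemma delta_insert {j : ℕ} {v : Finset ℕ} (hj : j ∉ v) (γ : Finset ℕ → ℝ) (u : Finset ℕ) :
    Δ (insert j v) γ u = Δ v γ u - Δ v γ (insert j u) := by
  unfold Δ
  rw [sum_powerset_insert hj, sub_eq_add_neg, ← sum_neg_distrib]
  congr 1
  refine sum_congr rfl fun w hw => ?_
  have hjw : j ∉ w := fun h => hj (mem_powerset.1 hw h)
  rw [card_insert_of_notMem hjw, union_insert, insert_union, pow_succ]
  ring

lemma delta_singleton (γ : Finset ℕ → ℝ) (j : ℕ) (u : Finset ℕ) :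
    Δ {j} γ u = γ u - γ (insert j u) := by
  simpa using delta_insert (notMem_empty j) γ u

lemma delta_eq_zero_of_mem {j : ℕ} {v u : Finset ℕ} (hjv : j ∈ v) (hju : j ∈ u) :
    Δ v γ u = 0 := by
  rw [← insert_erase hjv, delta_insert (notMem_erase j v), insert_eq_of_mem hju, sub_self]

lemma delta_sdiff_union_eq_sum_powerset {S d : Finset ℕ} (hdS : d ⊆ S) (γ : Finset ℕ → ℝ) :
    ∀ u, Disjoint u d →
      Δ (S \ (u ∪ d)) γ u = ∑ w ∈ d.powerset, Δ (S \ (u ∪ w)) γ (u ∪ w) := by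
  induction d using Finset.induction_on with
  | empty => intro u _; simp
  | insert j d hjd ih =>
    intro u hud
    have hju : j ∉ u := disjoint_right.1 hud (mem_insert_self j d)
    have hdS' : d ⊆ S := (subset_insert j d).trans hdS
    have hsplit : S \ (u ∪ d) = insert j (S \ (u ∪ insert j d)) := by
      have := hdS (mem_insert_self j d)
      ext x
      grind
    have hstep := delta_insert (j := j) (v := S \ (u ∪ insert j d)) (by simp) γ u
    rw [← hsplit, ih hdS' u (disjoint_insert_right.1 hud).2] at hstep
    have hnext :=
      ih hdS' (insert j u) (disjoint_insert_left.2 ⟨hjd, (disjoint_insert_right.1 hud).2⟩)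
    rw [sum_powerset_insert hjd]
    simp only [union_insert, insert_union] at hstep hnext ⊢
    linarith

lemma delta_sdiff_eq_sum_Icc {u R S : Finset ℕ} (huR : u ⊆ R) (hRS : R ⊆ S)
    (γ : Finset ℕ → ℝ) : Δ (S \ R) γ u = ∑ v ∈ Icc u R, Δ (S \ v) γ v := by
  have h := delta_sdiff_union_eq_sum_powerset (sdiff_subset.trans hRS) γ u disjoint_sdiff
  rw [union_sdiff_of_subset huR] at h
  rw [h, Icc_eq_image_powerset huR, sum_image]
  intro w₁ hw₁ w₂ hw₂ heq
  have hw₁' := disjoint_of_subset_right (mem_powerset.1 hw₁) disjoint_sdiff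
  have hw₂' := disjoint_of_subset_right (mem_powerset.1 hw₂) disjoint_sdiff
  rw [← union_sdiff_cancel_left hw₁', ← union_sdiff_cancel_left hw₂']
  exact congrArg (· \ u) heq

end Difference

lemma eventually_subset_range (u : Finset ℕ) : ∀ᶠ r in atTop, u ⊆ range r :=
  eventually_atTop.2 ⟨_, fun _ hr => (subset_range_sup_succ u).trans (range_subset_range.2 hr)⟩

namespace CM

variable {γ : Finset ℕ → ℝ} (h : CM γ)
include h

lemma nonneg (u : Finset ℕ) : 0 ≤ γ u := by
  simpa using h ∅ u

lemma delta_anti {v v' : Finset ℕ} (hv : v ⊆ v') (u : Finset ℕ) : Δ v' γ u ≤ Δ v γ u := by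
  suffices ∀ t, Δ (v ∪ t) γ u ≤ Δ v γ u by simpa [union_eq_right.2 hv] using this v'
  intro t
  induction t using Finset.induction_on with
  | empty => simp
  | insert j t _ ih =>
    by_cases hj : j ∈ v ∪ t
    · rwa [union_insert, insert_eq_of_mem hj]
    · rw [union_insert, delta_insert hj]
      linarith [h (v ∪ t) (insert j u)]

lemma delta_le (v u : Finset ℕ) : Δ v γ u ≤ γ u := by
  simpa using h.delta_anti (empty_subset v) u

lemma antitone {u u' : Finset ℕ} (hu : u ⊆ u') : γ u' ≤ γ u := by
  have hsum := delta_sdiff_eq_sum_Icc hu subset_rfl γ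
  rw [Finset.sdiff_self, delta_empty] at hsum
  rw [hsum]
  simpa using single_le_sum (fun v _ => h (u' \ v) v) (right_mem_Icc.2 hu)

end CM

/-- The limit `lim_{s → ∞} (Δ_{[s] ∖ v} γ)_u`, which exists for completely monotone `γ`. -/
noncomputable def deltaLim (γ : Finset ℕ → ℝ) (v u : Finset ℕ) : ℝ :=
  ⨅ s : ℕ, Δ (range s \ v) γ u

namespace CM

variable {γ : Finset ℕ → ℝ} (h : CM γ)
include h

lemma antitone_delta_range_sdiff (v u : Finset ℕ) :
    Antitone fun s : ℕ => Δ (range s \ v) γ u := fun _ _ hss =>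
  h.delta_anti (sdiff_subset_sdiff (range_subset_range.2 hss) subset_rfl) u

lemma deltaLim_le (v u : Finset ℕ) (s : ℕ) : deltaLim γ v u ≤ Δ (range s \ v) γ u :=
  ciInf_le ⟨0, by rintro _ ⟨s, rfl⟩; exact h _ _⟩ s

lemma deltaLim_nonneg (v u : Finset ℕ) : 0 ≤ deltaLim γ v u :=
  le_ciInf fun _ => h _ _

lemma tendsto_deltaLim (v u : Finset ℕ) :
    Tendsto (fun s : ℕ => Δ (range s \ v) γ u) atTop (𝓝 (deltaLim γ v u)) :=
  tendsto_atTop_ciInf (h.antitone_delta_range_sdiff v u) ⟨0, by rintro _ ⟨s, rfl⟩; exact h _ _⟩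

lemma deltaLim_eq_sum_Icc {u R : Finset ℕ} (huR : u ⊆ R) :
    deltaLim γ R u = ∑ v ∈ Icc u R, deltaLim γ v v := by
  refine tendsto_nhds_unique (h.tendsto_deltaLim R u) ?_
  refine (tendsto_finsetSum _ fun v _ => h.tendsto_deltaLim v v).congr' ?_
  filter_upwards [eventually_subset_range R] with s hRs
  exact (delta_sdiff_eq_sum_Icc huR hRs γ).symm

lemma summable_deltaLim : Summable fun v => deltaLim γ v v := by
  refine summable_of_sum_le (c := γ ∅) (fun v => h.deltaLim_nonneg v v) fun F => ?_
  obtain ⟨s, hs⟩ := ((eventually_all_finset F).2 fun v _ => eventually_subset_range v).exists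
  calc ∑ v ∈ F, deltaLim γ v v ≤ ∑ v ∈ F, Δ (range s \ v) γ v :=
        sum_le_sum fun v _ => h.deltaLim_le v v s
    _ ≤ ∑ v ∈ Icc ∅ (range s), Δ (range s \ v) γ v :=
        sum_le_sum_of_subset_of_nonneg (fun v hv => by simpa using hs v hv) fun _ _ _ => h _ _
    _ = γ ∅ := by
        rw [← delta_sdiff_eq_sum_Icc (empty_subset _) subset_rfl, Finset.sdiff_self,
          delta_empty]

end CM

lemma acond_iff {γ : Finset ℕ → ℝ} :
    Acond γ ↔ CM γ ∧ ∀ u, Tendsto (fun r => deltaLim γ (range r) u) atTop (𝓝 (γ u)) := by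
  refine ⟨fun ⟨h, hA⟩ => ⟨h, fun u => ?_⟩, fun ⟨h, hA⟩ => ⟨h, fun u => ⟨_, fun r =>
    h.tendsto_deltaLim _ u, hA u⟩⟩⟩
  obtain ⟨g, hg, hlim⟩ := hA u
  exact hlim.congr fun r => tendsto_nhds_unique (hg r) (h.tendsto_deltaLim _ u)

section Tsum

variable {ι : Type*} {g : ι → ℝ}

lemma Summable.ite_zero (hg : Summable g) (P : ι → Prop) [DecidablePred P] :
    Summable fun i => if P i then g i else 0 :=
  (hg.indicator {i | P i}).congr fun i => by simp [Set.indicator_apply]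

lemma tendsto_tsum_ite {α : Type*} {l : Filter α} (hg : Summable g) {P : α → ι → Prop}
    [∀ a, DecidablePred (P a)] {Q : ι → Prop} [DecidablePred Q]
    (hPQ : ∀ i, ∀ᶠ a in l, P a i ↔ Q i) :
    Tendsto (fun a => ∑' i, if P a i then g i else 0) l (𝓝 (∑' i, if Q i then g i else 0)) := by
  refine tendsto_tsum_of_dominated_convergence hg.abs (fun i => ?_) (.of_forall fun a i => ?_)
  · exact tendsto_const_nhds.congr' ((hPQ i).mono fun a h => by simp only [h])
  · split_ifs <;> simp

end Tsum

/-- `T↑` with `C = 1`: `(upSum g)_u = Σ_{v ⊇ u} g_v`. -/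
noncomputable def upSum (g : Finset ℕ → ℝ) (u : Finset ℕ) : ℝ :=
  ∑' v, if u ⊆ v then g v else 0

lemma delta_tsum {F : Finset ℕ → Finset ℕ → ℝ} (hF : ∀ u, Summable fun w => F w u)
    (v u : Finset ℕ) : Δ v (fun u => ∑' w, F w u) u = ∑' w, Δ v (F w) u := by
  simp only [Δ, ← tsum_mul_left]
  exact (Summable.tsum_finsetSum fun _ _ => (hF _).mul_left _).symm

lemma delta_ite_subset (a : ℝ) (w v u : Finset ℕ) :
    Δ v (fun u => if u ⊆ w then a else 0) u = if u ⊆ w ∧ Disjoint v w then a else 0 := by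
  induction v using Finset.induction_on generalizing u with
  | empty => simp
  | insert j v hjv ih =>
    rw [delta_insert hjv, ih, ih]
    by_cases hjw : j ∈ w <;> simp [hjw, insert_subset_iff, disjoint_insert_left]

lemma delta_upSum {g : Finset ℕ → ℝ} (hg : Summable g) (v u : Finset ℕ) :
    Δ v (upSum g) u = ∑' w, if u ⊆ w ∧ Disjoint v w then g w else 0 := by
  rw [show upSum g = fun u => ∑' w, if u ⊆ w then g w else 0 from rfl,
    delta_tsum fun u => hg.ite_zero _]
  simp only [delta_ite_subset]

lemma le_upSum {g : Finset ℕ → ℝ} (hg0 : ∀ v, 0 ≤ g v) (hg : Summable g) {u v : Finset ℕ}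
    (huv : u ⊆ v) : g v ≤ upSum g u := by
  simpa [upSum, huv] using (hg.ite_zero (u ⊆ ·)).le_tsum v fun w _ => by split_ifs <;> simp [hg0]

lemma acond_upSum {g : Finset ℕ → ℝ} (hg0 : ∀ v, 0 ≤ g v) (hg : Summable g) :
    Acond (upSum g) := by
  refine ⟨fun v u => ?_, fun u => ⟨fun r => ∑' w, if u ⊆ w ∧ w ⊆ range r then g w else 0,
    fun r => ?_, ?_⟩⟩
  · rw [delta_upSum hg]
    exact tsum_nonneg fun w => by split_ifs <;> simp [hg0]
  · simp only [delta_upSum hg]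
    refine tendsto_tsum_ite hg fun w => ?_
    filter_upwards [eventually_subset_range w] with s hws
    have : Disjoint (range s \ range r) w ↔ w ⊆ range r := by
      simp only [disjoint_left, subset_iff]
      grind
    rw [this]
  · refine tendsto_tsum_ite hg fun w => ?_
    filter_upwards [eventually_subset_range w] with r hwr
    simp [hwr]

/-- Expanding `γ_u = (Δ_∅ γ)_u` over `Icc u (u ∪ t)`, the term at `u` is `(Δ_t γ)_u` and the others
are bounded by `γ_v` for sets `v ⊄ [r]`. -/
lemma CM.sub_tsum_le_delta_range_sdiff {γ : Finset ℕ → ℝ} (h : CM γ) (hγ : Summable γ) {r : ℕ}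
    {u : Finset ℕ} (hur : u ⊆ range r) (s : ℕ) :
    γ u - ∑' v, (if ¬ v ⊆ range r then γ v else 0) ≤ Δ (range s \ range r) γ u := by
  set t := range s \ range r
  have hut : Disjoint u t := disjoint_of_subset_left hur disjoint_sdiff_self_right
  have hdec := delta_sdiff_eq_sum_Icc (u := u) (R := u ∪ t) subset_union_left subset_rfl γ
  rw [Finset.sdiff_self, delta_empty, Icc_eq_cons_Ioc subset_union_left, sum_cons,
    union_sdiff_cancel_left hut] at hdec
  have hrest : ∑ v ∈ Ioc u (u ∪ t), Δ ((u ∪ t) \ v) γ v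
      ≤ ∑' v, (if ¬ v ⊆ range r then γ v else 0) := by
    calc _ ≤ ∑ v ∈ Ioc u (u ∪ t), if ¬ v ⊆ range r then γ v else 0 := by
          refine sum_le_sum fun v hv => ?_
          obtain ⟨huv, hvut⟩ := mem_Ioc.1 hv
          obtain ⟨x, hxv, hxu⟩ := not_subset.1 (not_subset_of_ssubset huv)
          have hxt : x ∈ t := (mem_union.1 (hvut hxv)).resolve_left hxu
          rw [if_pos fun hvr => (mem_sdiff.1 hxt).2 (hvr hxv)]
          exact h.delta_le _ v
      _ ≤ _ := (hγ.ite_zero _).sum_le_tsum _ fun v _ => by split_ifs <;> simp [h.nonneg]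
  linarith

lemma Pcond.acond {γ : Finset ℕ → ℝ} (hP : Pcond γ) : Acond γ := by
  obtain ⟨h, hγ⟩ := hP
  have htail : Tendsto (fun r => ∑' v, if ¬ v ⊆ range r then γ v else 0) atTop (𝓝 0) := by
    simpa only [if_false, tsum_zero] using tendsto_tsum_ite (Q := fun _ => False) hγ fun v => by
      filter_upwards [eventually_subset_range v] with r hvr
      simp [hvr]
  refine acond_iff.2 ⟨h, fun u => ?_⟩
  refine tendsto_of_tendsto_of_tendsto_of_le_of_le'
    (by simpa only [sub_zero] using htail.const_sub (γ u))
    tendsto_const_nhds ?_ (.of_forall fun r => ?_)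
  · filter_upwards [eventually_subset_range u] with r hur
    exact le_ciInf (h.sub_tsum_le_delta_range_sdiff hγ hur)
  · simpa using h.deltaLim_le (range r) u 0

lemma CM.ncond_of_tendsto_singleton {γ : Finset ℕ → ℝ} (h : CM γ)
    (hγ : Tendsto (fun j => γ {j}) atTop (𝓝 0)) : Ncond γ := by
  refine ⟨h, fun ε hε => ?_⟩
  obtain ⟨r, hr⟩ := eventually_atTop.1 (hγ.eventually (gt_mem_nhds hε))
  refine ⟨r + 1, fun u hu => ?_⟩
  have hne : u.Nonempty := nonempty_iff_ne_empty.2 fun h => by simp [h] at hu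
  obtain ⟨j, hju, hj⟩ := exists_mem_eq_sup u hne id
  exact (h.antitone (singleton_subset_iff.2 hju)).trans_lt (hr j (by simp at hj; omega))

lemma CM.apply_singleton_le_sub_deltaLim {γ : Finset ℕ → ℝ} (h : CM γ) {r j : ℕ} (hrj : r ≤ j) :
    γ {j} ≤ γ ∅ - deltaLim γ (range r) ∅ := by
  have hj : {j} ⊆ range (j + 1) \ range r := by simp [hrj]
  have := (h.deltaLim_le (range r) ∅ (j + 1)).trans (h.delta_anti hj ∅)
  rw [delta_singleton, insert_empty_eq] at this
  linarith

lemma Acond.ncond {γ : Finset ℕ → ℝ} (hA : Acond γ) : Ncond γ := by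
  obtain ⟨h, hlim⟩ := acond_iff.1 hA
  refine h.ncond_of_tendsto_singleton (tendsto_order.2 ⟨fun a ha => .of_forall fun j =>
    ha.trans_le (h.nonneg _), fun ε hε => ?_⟩)
  obtain ⟨r, hr⟩ := ((hlim ∅).const_sub (γ ∅)).eventually
    (gt_mem_nhds (by rwa [sub_self])) |>.exists
  filter_upwards [eventually_ge_atTop r] with j hj
  exact (h.apply_singleton_le_sub_deltaLim hj).trans_lt hr

lemma Acond.eq_upSum_deltaLim {γ : Finset ℕ → ℝ} (hA : Acond γ) :
    γ = upSum fun v => deltaLim γ v v := by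
  obtain ⟨h, hlim⟩ := acond_iff.1 hA
  ext u
  refine tendsto_nhds_unique (hlim u) ?_
  have hsum := tendsto_tsum_ite (l := atTop) (P := fun r v => u ⊆ v ∧ v ⊆ range r)
    (Q := (u ⊆ ·)) h.summable_deltaLim fun v => by
      filter_upwards [eventually_subset_range v] with r hvr
      simp [hvr]
  refine hsum.congr' ?_
  filter_upwards [eventually_subset_range u] with r hur
  rw [h.deltaLim_eq_sum_Icc hur, tsum_eq_sum (L := .unconditional _) (s := Icc u (range r))
    fun v hv => if_neg (by simpa using hv)]
  exact sum_congr rfl fun v hv => if_pos (by simpa using hv)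

lemma SC.acond_upSum {C : ℝ} {γ : Finset ℕ → ℝ} (hγ : SC C γ) :
    Acond (upSum fun v => C ^ (2 * v.card) * γ v) :=
  _root_.acond_upSum (fun v => mul_nonneg ((even_two_mul _).pow_nonneg C) (hγ.1 v)) hγ.2

lemma Acond.exists_sc_upSum_eq {C : ℝ} (hC : C ≠ 0) {γ : Finset ℕ → ℝ} (hA : Acond γ) :
    ∃ δ, SC C δ ∧ upSum (fun v => C ^ (2 * v.card) * δ v) = γ := by
  have h := hA.1
  have hcancel (v : Finset ℕ) :
      C ^ (2 * v.card) * ((C ^ (2 * v.card))⁻¹ * deltaLim γ v v) = deltaLim γ v v :=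
    mul_inv_cancel_left₀ (pow_ne_zero _ hC) _
  refine ⟨fun v => (C ^ (2 * v.card))⁻¹ * deltaLim γ v v, ⟨fun v => ?_, ?_⟩, ?_⟩
  · exact mul_nonneg (inv_nonneg.2 ((even_two_mul _).pow_nonneg C)) (h.deltaLim_nonneg v v)
  · simpa only [hcancel] using h.summable_deltaLim
  · simpa only [hcancel] using hA.eq_upSum_deltaLim.symm

lemma cm_const {c : ℝ} (hc : 0 ≤ c) : CM fun _ => c := by
  intro v u
  have := congrArg (Int.cast : ℤ → ℝ) (sum_powerset_neg_one_pow_card (x := v))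
  push_cast at this
  rw [Δ, ← sum_mul, this]
  split_ifs <;> simp [hc]

lemma not_ncond_const {c : ℝ} (hc : 0 < c) : ¬ Ncond fun _ => c := by
  rintro ⟨-, h⟩
  obtain ⟨r, hr⟩ := h c hc
  exact lt_irrefl c (hr {r} (by simp))

section ProductWeights

variable {a : ℕ → ℝ}

lemma delta_prod {u v : Finset ℕ} (huv : Disjoint u v) :
    Δ v (fun u => ∏ j ∈ u, a j) u = (∏ j ∈ u, a j) * ∏ j ∈ v, (1 - a j) := by
  induction v using Finset.induction_on generalizing u with
  | empty => simp
  | insert j v hjv ih =>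
    have hju : j ∉ u := disjoint_right.1 huv (mem_insert_self j v)
    have hv := (disjoint_insert_right.1 huv).2
    rw [delta_insert hjv, ih hv, ih (disjoint_insert_left.2 ⟨hjv, hv⟩), prod_insert hju,
      prod_insert hjv]
    ring

lemma cm_prod (ha0 : ∀ j, 0 ≤ a j) (ha1 : ∀ j, a j ≤ 1) : CM fun u => ∏ j ∈ u, a j := by
  intro v u
  by_cases huv : Disjoint u v
  · rw [delta_prod huv]
    exact mul_nonneg (prod_nonneg fun j _ => ha0 j) (prod_nonneg fun j _ => sub_nonneg.2 (ha1 j))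
  · obtain ⟨j, hju, hjv⟩ := not_disjoint_iff.1 huv
    rw [delta_eq_zero_of_mem hjv hju]

end ProductWeights

lemma prod_range_sdiff_one_sub_inv_succ {r s : ℕ} (hr : 1 ≤ r) (hrs : r ≤ s) :
    ∏ j ∈ range s \ range r, (1 - ((j : ℝ) + 1)⁻¹) = r / s := by
  induction s, hrs using Nat.le_induction with
  | base => rw [Finset.sdiff_self, prod_empty, div_self (by positivity)]
  | succ s hrs ih =>
    rw [range_add_one, insert_sdiff_of_notMem _ (by simp; omega), prod_insert (by simp), ih]
    have : (0 : ℝ) < s := by exact_mod_cast hr.trans hrs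
    field_simp
    push_cast
    ring

lemma cm_prod_inv_succ : CM fun u => ∏ j ∈ u, ((j : ℝ) + 1)⁻¹ :=
  cm_prod (fun _ => by positivity) fun _ => inv_le_one_of_one_le₀ (by simp)

lemma ncond_prod_inv_succ : Ncond fun u => ∏ j ∈ u, ((j : ℝ) + 1)⁻¹ :=
  cm_prod_inv_succ.ncond_of_tendsto_singleton (by
    simpa using tendsto_one_div_add_atTop_nhds_zero_nat (𝕜 := ℝ))

lemma not_acond_prod_inv_succ : ¬ Acond fun u => ∏ j ∈ u, ((j : ℝ) + 1)⁻¹ := by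
  intro hA
  obtain ⟨h, hlim⟩ := acond_iff.1 hA
  have hzero : ∀ r, 1 ≤ r → deltaLim (fun u => ∏ j ∈ u, ((j : ℝ) + 1)⁻¹) (range r) ∅ = 0 :=
    fun r hr => tendsto_nhds_unique (h.tendsto_deltaLim _ ∅) <|
      (tendsto_const_div_atTop_nhds_zero_nat (r : ℝ)).congr' <| by
        filter_upwards [eventually_ge_atTop r] with s hs
        rw [delta_prod (disjoint_empty_left _), prod_empty, one_mul,
          prod_range_sdiff_one_sub_inv_succ hr hs]
  have := tendsto_nhds_unique (hlim ∅) <| tendsto_const_nhds.congr' <|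
    (eventually_ge_atTop 1).mono fun r hr => (hzero r hr).symm
  simp at this

section RangeWeights

variable {γ : Finset ℕ → ℝ}
  (hγ : ∀ u, γ u = if u ≠ ∅ ∧ u = range u.card then ((u.card : ℝ) ^ 2)⁻¹ else 0)
include hγ

lemma nonneg_of_eq_range_weight (u : Finset ℕ) : 0 ≤ γ u := by
  rw [hγ]
  exact ite_nonneg (by positivity) le_rfl

lemma apply_range_of_eq_range_weight (s : ℕ) : γ (range s) = ((s : ℝ) ^ 2)⁻¹ := by
  rw [hγ]
  rcases Nat.eq_zero_or_pos s with rfl | hs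
  · simp
  · simp [hs.ne']

lemma summable_of_eq_range_weight : Summable γ := by
  have hinj : Function.Injective (range : ℕ → Finset ℕ) := fun a b hab => by
    simpa using congrArg card hab
  have hoff : ∀ u ∉ Set.range (range : ℕ → Finset ℕ), γ u = 0 := fun u hu => by
    rw [hγ, if_neg]
    exact fun h => hu ⟨u.card, h.2.symm⟩
  rw [← hinj.summable_iff hoff]
  simp only [Function.comp_def, apply_range_of_eq_range_weight hγ]
  exact Real.summable_nat_pow_inv.2 one_lt_two

/-- Each of the `2 ^ n` subsets of `[n]` carries weight at least `γ_{[n]} = n⁻²` in `upSum γ`,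
which outgrows any bound. -/
lemma not_summable_upSum_of_eq_range_weight : ¬ Summable (upSum γ) := by
  intro hsum
  have hγ0 := nonneg_of_eq_range_weight hγ
  have hγs := summable_of_eq_range_weight hγ
  have hup0 : ∀ u, 0 ≤ upSum γ u := (acond_upSum hγ0 hγs).1.nonneg
  set M := ∑' u, upSum γ u
  have hbound (n : ℕ) : (2 : ℝ) ^ n * ((n : ℝ) ^ 2)⁻¹ ≤ M := by
    have hle := card_nsmul_le_sum (range n).powerset (upSum γ) ((n : ℝ) ^ 2)⁻¹ fun u hu =>
      apply_range_of_eq_range_weight hγ n ▸ le_upSum hγ0 hγs (mem_powerset.1 hu)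
    rw [card_powerset, card_range, nsmul_eq_mul] at hle
    push_cast at hle
    exact hle.trans (hsum.sum_le_tsum _ fun u _ => hup0 u)
  have hM : 0 ≤ M := tsum_nonneg hup0
  obtain ⟨n, hn, hn1⟩ := ((tendsto_pow_const_div_const_pow_of_one_lt 2 one_lt_two).eventually
    (gt_mem_nhds (inv_pos.2 (by linarith : 0 < M + 1))) |>.and (eventually_ge_atTop 1)).exists
  have hn2 : (0 : ℝ) < (n : ℝ) ^ 2 := by positivity
  have h1 := hbound n
  rw [← div_eq_mul_inv, div_le_iff₀ hn2] at h1
  rw [div_lt_iff₀ (by positivity), inv_mul_eq_div, lt_div_iff₀ (by linarith)] at hn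
  nlinarith

end RangeWeights

theorem stmt11 (C : ℝ) (hC : 0 < C)
    (Tup : (Finset ℕ → ℝ) → Finset ℕ → ℝ)
    (hTup : ∀ γ u, Tup γ u = ∑' v : Finset ℕ, if u ⊆ v then C ^ (2 * v.card) * γ v else 0)
    -- witness (b): product weights `γ_u = Π_{j ∈ u} 1/j` (0-indexed: `1/(j+1)`)
    (γb : Finset ℕ → ℝ) (hγb : ∀ u, γb u = ∏ j ∈ u, ((j : ℝ) + 1)⁻¹)
    -- witness (c): `γ_u = s^{−2}` for `u = {1,…,s}` (0-indexed: `u = range s`), else `0`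
    (γc : Finset ℕ → ℝ)
    (hγc : ∀ u, γc u = if u ≠ ∅ ∧ u = Finset.range u.card then ((u.card : ℝ) ^ 2)⁻¹ else 0)
    -- the sum operator with `C = 1`, used for the witness in (c)
    (Tup1 : (Finset ℕ → ℝ) → Finset ℕ → ℝ)
    (hTup1 : ∀ γ u, Tup1 γ u = ∑' v : Finset ℕ, if u ⊆ v then γ v else 0) :
    (∀ γ, Pcond γ → Acond γ) ∧ (∃ γ, Acond γ ∧ ¬ Pcond γ) ∧
    (∀ γ, SC C γ → Acond (Tup γ)) ∧ (∀ γ, Acond γ → ∃ δ, SC C δ ∧ Tup δ = γ) ∧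
    (∀ γ, Acond γ → Ncond γ) ∧ (∃ γ, Ncond γ ∧ ¬ Acond γ) ∧
    (∀ γ, Ncond γ → CM γ) ∧ (∃ γ, CM γ ∧ ¬ Ncond γ) ∧
    (∀ c : ℝ, 0 < c → CM (fun _ => c) ∧ ¬ Ncond (fun _ => c)) ∧
    (Ncond γb ∧ ¬ Acond γb) ∧
    (Summable γc ∧ Acond (Tup1 γc) ∧ ¬ Pcond (Tup1 γc)) := by
  have hTup' (γ : Finset ℕ → ℝ) : Tup γ = upSum fun v => C ^ (2 * v.card) * γ v :=
    funext (hTup γ)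
  obtain rfl : Tup1 = upSum := funext fun γ => funext (hTup1 γ)
  obtain rfl : γb = fun u : Finset ℕ => ∏ j ∈ u, ((j : ℝ) + 1)⁻¹ := funext hγb
  have hγcA : Acond (upSum γc) :=
    acond_upSum (nonneg_of_eq_range_weight hγc) (summable_of_eq_range_weight hγc)
  have hγcP : ¬ Pcond (upSum γc) := fun h => not_summable_upSum_of_eq_range_weight hγc h.2
  refine ⟨fun _ => Pcond.acond, ⟨_, hγcA, hγcP⟩, fun γ hγ => hTup' γ ▸ hγ.acond_upSum,
    fun γ hγ => ?_, fun _ => Acond.ncond, ⟨_, ncond_prod_inv_succ, not_acond_prod_inv_succ⟩,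
    fun _ => And.left, ⟨_, cm_const zero_le_one, not_ncond_const one_pos⟩,
    fun _ hc => ⟨cm_const hc.le, not_ncond_const hc⟩,
    ⟨ncond_prod_inv_succ, not_acond_prod_inv_succ⟩, summable_of_eq_range_weight hγc, hγcA, hγcP⟩
  obtain ⟨δ, hδ, hrep⟩ := hγ.exists_sc_upSum_eq hC.ne'
  exact ⟨δ, hδ, (hTup' δ).trans hrep⟩
end

section
/- Let C > 0 and let γ be POD weights, i.e., γ_u = Γ_{|u|} Π_{j ∈ u} γ_j with (γ_j)_{j ∈ ℕ} non-increasing and non-negative, Γ_k ≥ 0 and Γ_k ≤ C_a (k!)^a for all k ≥ 0, for constants a, C_a > 0, and put p := sup{τ > 0 : Σ_j γ_j^{1/τ} < ∞} (sup ∅ := 0). Then: (i) for every j ∈ ℕ, Σ_{u ⊆ [j], j ∈ u} C^{2|u|} γ_u ≥ C² Γ_1 γ_j; (ii) if either (p > a and Σ_{j ∈ ℕ} γ_j < ∞) or (p = a ≥ 1 and Σ_{j ∈ ℕ} (C² γ_j)^{1/p} < 1), then there exists a constant c > 0 such that Σ_{u ⊆ [j], j ∈ u} C^{2|u|} γ_u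 ≤ c γ_j for every j ∈ ℕ. -/
/-!
Splitting off `j`, the sum equals `C² γ_j D_j` with
`D_j = ∑_{v ⊆ range j} Γ_{|v|+1} ∏_{i ∈ v} C² γ_i`, and the term `v = ∅` of `D_j` gives (i).
For (ii) write `C² γ_i = w_i ^ q` with `T := ∑ w_i < ∞`, where `q = max t 1` for some `t > a`
in the set defining the decay, or `q = a` in the critical case. Since the elementary symmetric
sum `e_k(w)` is at most `(∑ w)^k / k!` and `∑ x^q ≤ (∑ x)^q` for `q ≥ 1`, the subsets of size
`k` contribute at most `Γ_{k+1} (T^k / k!)^q ≤ C_a ((k+1)!)^a (T^k / k!)^q`, uniformly in `j`.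
This series converges by the ratio test: the ratio `(k+2)^a (T/(k+1))^q` tends to `0` if
`a < q` and to `T^a < 1` if `q = a`.
-/

open Finset

/-- The decay of a family of non-negative reals:
`decay(a) := sup {τ > 0 : Σ_v a_v^{1/τ} < ∞}` (with `sup ∅ := 0`),
taking values in `[0, ∞]`. -/
noncomputable def decay {V : Type*} (f : V → ℝ) : ENNReal :=
  ⨆ (t : ℝ) (_ : 0 < t ∧ Summable fun v => f v ^ (1 / t)), ENNReal.ofReal t

open Filter
open scoped Nat Topology

theorem Finset.factorial_mul_sum_powersetCard_prod_le {ι R : Type*} [CommSemiring R]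
    [PartialOrder R] [IsOrderedRing R] (s : Finset ι) (z : ι → R)
    (hz : ∀ i ∈ s, 0 ≤ z i) (k : ℕ) :
    (k ! : R) * ∑ v ∈ s.powersetCard k, ∏ i ∈ v, z i ≤ (∑ i ∈ s, z i) ^ k := by
  classical
  -- `(∑ z)^k` expanded by the multinomial theorem; the terms indexed by the indicators of
  -- `k`-subsets have coefficient `k!`, and all other terms are nonnegative.
  let ind : Finset ι → ι → ℕ := fun v i => if i ∈ v then 1 else 0
  have hind : ∀ v ∈ s.powersetCard k, ind v ∈ s.piAntidiag k ∧
      Nat.multinomial s (ind v) = k ! ∧ ∏ i ∈ s, z i ^ ind v i = ∏ i ∈ v, z i := by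
    intro v hv
    obtain ⟨hvs, rfl⟩ := mem_powersetCard.1 hv
    have hsum : ∑ i ∈ s, ind v i = #v := by
      simp [ind, inter_eq_right.2 hvs]
    refine ⟨mem_piAntidiag.2 ⟨hsum, fun i hi => hvs (by simpa [ind] using hi)⟩, ?_, ?_⟩
    · have := Nat.multinomial_spec s (ind v)
      rw [prod_eq_one (fun i _ => by by_cases h : i ∈ v <;> simp [ind, h]), one_mul, hsum] at this
      exact this
    · simp only [ind, pow_ite, pow_one, pow_zero]
      rw [prod_ite_mem, inter_eq_right.2 hvs]
  have hinj : Set.InjOn ind (s.powersetCard k) := by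
    intro v _ w _ h
    ext i
    have := congrFun h i
    by_cases hv : i ∈ v <;> by_cases hw : i ∈ w <;> simp_all [ind]
  rw [sum_pow_eq_sum_piAntidiag, mul_sum]
  calc ∑ v ∈ s.powersetCard k, (k ! : R) * ∏ i ∈ v, z i
      = ∑ f ∈ (s.powersetCard k).image ind, (Nat.multinomial s f : R) * ∏ i ∈ s, z i ^ f i := by
        rw [sum_image hinj]
        refine sum_congr rfl fun v hv => ?_
        rw [(hind v hv).2.1, (hind v hv).2.2]
    _ ≤ _ := sum_le_sum_of_subset_of_nonneg
        (fun f hf => by obtain ⟨v, hv, rfl⟩ := mem_image.1 hf; exact (hind v hv).1)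
        fun f _ _ => mul_nonneg (Nat.cast_nonneg _) (prod_nonneg fun i hi => pow_nonneg (hz i hi) _)

theorem Real.sum_rpow_le_rpow_sum {ι : Type*} (s : Finset ι) {f : ι → ℝ}
    (hf : ∀ i ∈ s, 0 ≤ f i) {q : ℝ} (hq : 1 ≤ q) :
    ∑ i ∈ s, f i ^ q ≤ (∑ i ∈ s, f i) ^ q := by
  classical
  induction s using Finset.induction_on with
  | empty => simp [Real.zero_rpow (by linarith : q ≠ 0)]
  | @insert a s ha ih =>
    rw [sum_insert ha, sum_insert ha]
    have hs : ∀ i ∈ s, 0 ≤ f i := fun i hi => hf i (mem_insert_of_mem hi)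
    calc f a ^ q + ∑ i ∈ s, f i ^ q ≤ f a ^ q + (∑ i ∈ s, f i) ^ q := by gcongr; exact ih hs
      _ ≤ (f a + ∑ i ∈ s, f i) ^ q :=
        Real.add_rpow_le_rpow_add (hf a (mem_insert_self a s)) (sum_nonneg hs) hq

theorem Real.sum_powersetCard_prod_rpow_le {ι : Type*} (s : Finset ι) {w : ι → ℝ}
    (hw : ∀ i ∈ s, 0 ≤ w i) {q : ℝ} (hq : 1 ≤ q) (k : ℕ) :
    ∑ v ∈ s.powersetCard k, ∏ i ∈ v, w i ^ q ≤ ((∑ i ∈ s, w i) ^ k / k !) ^ q := by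
  have hv : ∀ v ∈ s.powersetCard k, ∀ i ∈ v, 0 ≤ w i := fun v hv i hi =>
    hw i ((mem_powersetCard.1 hv).1 hi)
  calc ∑ v ∈ s.powersetCard k, ∏ i ∈ v, w i ^ q
      = ∑ v ∈ s.powersetCard k, (∏ i ∈ v, w i) ^ q :=
        sum_congr rfl fun v hv' => Real.finsetProd_rpow v w (hv v hv') q
    _ ≤ (∑ v ∈ s.powersetCard k, ∏ i ∈ v, w i) ^ q :=
        Real.sum_rpow_le_rpow_sum _ (fun v hv' => prod_nonneg (hv v hv')) hq
    _ ≤ ((∑ i ∈ s, w i) ^ k / k !) ^ q := by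
        gcongr
        · exact sum_nonneg fun v hv' => prod_nonneg (hv v hv')
        · rw [le_div_iff₀ (by positivity), mul_comm]
          exact factorial_mul_sum_powersetCard_prod_le s w hw k

theorem summable_factorial_succ_rpow_mul_pow_div_factorial_rpow {a q T : ℝ} (hq : 0 < q)
    (hT : 0 ≤ T) (h : a < q ∨ (a = q ∧ T < 1)) :
    Summable fun k : ℕ => (((k + 1) ! : ℕ) : ℝ) ^ a * (T ^ k / k !) ^ q := by
  set f : ℕ → ℝ := fun k => (((k + 1) ! : ℕ) : ℝ) ^ a * (T ^ k / k !) ^ q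
  set ρ : ℕ → ℝ := fun k => (((k : ℝ) + 2) / (k + 1)) ^ a * (T ^ q * ((k : ℝ) + 1) ^ (a - q))
  have hf : ∀ k, 0 ≤ f k := fun k => by positivity
  have hstep : ∀ k, f (k + 1) = ρ k * f k := by
    intro k
    have hk : (0 : ℝ) < k + 1 := by positivity
    have h1 : (((k + 1 + 1) ! : ℕ) : ℝ) = ((k : ℝ) + 2) * ((k + 1) ! : ℕ) := by
      push_cast [Nat.factorial_succ]; ring
    have h2 : T ^ (k + 1) / ((k + 1) ! : ℕ) = T / (k + 1) * (T ^ k / k !) := by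
      push_cast [Nat.factorial_succ]; field_simp; ring
    have h3 : ((k : ℝ) + 2) ^ a = (((k : ℝ) + 2) / (k + 1)) ^ a * ((k : ℝ) + 1) ^ a := by
      rw [← Real.mul_rpow (by positivity) hk.le, div_mul_cancel₀ _ hk.ne']
    simp only [f, ρ]
    rw [h1, h2, Real.mul_rpow (by positivity) (by positivity),
      Real.mul_rpow (by positivity) (by positivity), Real.div_rpow hT hk.le, h3,
      Real.rpow_sub hk]
    field_simp
  obtain ⟨ℓ, hℓ, hlim⟩ : ∃ ℓ < 1,
      Tendsto (fun k : ℕ => T ^ q * ((k : ℝ) + 1) ^ (a - q)) atTop (𝓝 ℓ) := by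
    rcases h with haq | ⟨rfl, hT1⟩
    · refine ⟨0, one_pos, ?_⟩
      have := (tendsto_rpow_neg_atTop (sub_pos.2 haq)).comp
        (tendsto_atTop_add_const_right atTop (1 : ℝ) tendsto_natCast_atTop_atTop)
      simpa [Function.comp_def] using this.const_mul (T ^ q)
    · refine ⟨T ^ a, Real.rpow_lt_one hT hT1 hq, ?_⟩
      simp
  have hratio : Tendsto (fun k : ℕ => ((k : ℝ) + 2) / (k + 1)) atTop (𝓝 1) := by
    have : Tendsto (fun k : ℕ => 1 + 1 / ((k : ℝ) + 1)) atTop (𝓝 (1 + 0)) :=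
      tendsto_const_nhds.add tendsto_one_div_add_atTop_nhds_zero_nat
    rw [add_zero] at this
    refine this.congr fun k => ?_
    field_simp; ring
  have hρ : Tendsto ρ atTop (𝓝 ℓ) := by
    simpa using (hratio.rpow_const (Or.inl one_ne_zero)).mul hlim
  refine summable_of_ratio_norm_eventually_le (r := (ℓ + 1) / 2) (by linarith) ?_
  filter_upwards [hρ.eventually_le_const (by linarith : ℓ < (ℓ + 1) / 2)] with k hk
  rw [Real.norm_of_nonneg (hf _), Real.norm_of_nonneg (hf _), hstep]
  exact mul_le_mul_of_nonneg_right hk (hf k)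

theorem summable_mul_pow_div_factorial_rpow {Γ : ℕ → ℝ} {a Ca q T : ℝ} (hΓnn : ∀ k, 0 ≤ Γ k)
    (hΓ : ∀ k : ℕ, Γ k ≤ Ca * (k ! : ℝ) ^ a) (hq : 0 < q) (hT : 0 ≤ T)
    (h : a < q ∨ (a = q ∧ T < 1)) :
    Summable fun k : ℕ => Γ (k + 1) * (T ^ k / k !) ^ q := by
  have hmaj := (summable_factorial_succ_rpow_mul_pow_div_factorial_rpow hq hT h).mul_left Ca
  refine hmaj.of_nonneg_of_le (fun k => mul_nonneg (hΓnn _) (by positivity)) fun k => ?_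
  rw [← mul_assoc]
  exact mul_le_mul_of_nonneg_right (hΓ (k + 1)) (by positivity)

theorem Finset.sum_filter_mem_powerset_range_succ {M : Type*} [AddCommMonoid M]
    (f : Finset ℕ → M) (j : ℕ) :
    ∑ u ∈ (range (j + 1)).powerset.filter (fun u => j ∈ u), f u =
      ∑ v ∈ (range j).powerset, f (insert j v) := by
  rw [sum_filter, range_add_one, sum_powerset_insert notMem_range_self]
  have hj : ∀ v ∈ (range j).powerset, j ∉ v := fun v hv hjv =>
    notMem_range_self (mem_powerset.1 hv hjv)
  simp +contextual [hj]

theorem sum_pow_card_mul_pod_eq {R : Type*} [CommSemiring R] (x : R) (Γ β : ℕ → R)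
    (γ : Finset ℕ → R) (hγ : ∀ u, γ u = Γ #u * ∏ i ∈ u, β i) (j : ℕ) :
    ∑ u ∈ (range (j + 1)).powerset.filter (fun u => j ∈ u), x ^ #u * γ u =
      x * β j * ∑ v ∈ (range j).powerset, Γ (#v + 1) * ∏ i ∈ v, x * β i := by
  rw [sum_filter_mem_powerset_range_succ, mul_sum]
  refine sum_congr rfl fun v hv => ?_
  have hjv : j ∉ v := fun hjv => notMem_range_self (mem_powerset.1 hv hjv)
  rw [hγ, card_insert_of_notMem hjv, prod_insert hjv, prod_mul_distrib, prod_const]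
  ring

theorem sum_powerset_mul_prod_le_tsum {Γ y : ℕ → ℝ} (hΓ : ∀ k, 0 ≤ Γ k) (hy : ∀ i, 0 ≤ y i)
    {q : ℝ} (hq : 1 ≤ q) (hsum : Summable fun i => y i ^ (1 / q))
    (hg : Summable fun k : ℕ => Γ (k + 1) * ((∑' i, y i ^ (1 / q)) ^ k / k !) ^ q)
    (s : Finset ℕ) :
    ∑ v ∈ s.powerset, Γ (#v + 1) * ∏ i ∈ v, y i ≤
      ∑' k : ℕ, Γ (k + 1) * ((∑' i, y i ^ (1 / q)) ^ k / k !) ^ q := by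
  set w : ℕ → ℝ := fun i => y i ^ (1 / q)
  have hw : ∀ i, 0 ≤ w i := fun i => Real.rpow_nonneg (hy i) _
  have hT : 0 ≤ ∑' i, w i := tsum_nonneg hw
  have hyw : ∀ i, y i = w i ^ q := fun i => by
    show y i = (y i ^ (1 / q)) ^ q
    rw [one_div, Real.rpow_inv_rpow (hy i) (by positivity)]
  rw [sum_powerset]
  calc ∑ k ∈ range (#s + 1), ∑ v ∈ s.powersetCard k, Γ (#v + 1) * ∏ i ∈ v, y i
      = ∑ k ∈ range (#s + 1), Γ (k + 1) * ∑ v ∈ s.powersetCard k, ∏ i ∈ v, w i ^ q := by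
        refine sum_congr rfl fun k _ => ?_
        rw [mul_sum]
        refine sum_congr rfl fun v hv => ?_
        rw [(mem_powersetCard.1 hv).2, prod_congr rfl fun i _ => hyw i]
    _ ≤ ∑ k ∈ range (#s + 1), Γ (k + 1) * ((∑ i ∈ s, w i) ^ k / k !) ^ q := by
        gcongr with k
        · exact hΓ _
        · exact Real.sum_powersetCard_prod_rpow_le s (fun i _ => hw i) hq k
    _ ≤ ∑ k ∈ range (#s + 1), Γ (k + 1) * ((∑' i, w i) ^ k / k !) ^ q := by
        refine sum_le_sum fun k _ => mul_le_mul_of_nonneg_left ?_ (hΓ _)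
        have hsw : 0 ≤ ∑ i ∈ s, w i := sum_nonneg fun i _ => hw i
        refine Real.rpow_le_rpow (by positivity) ?_ (by linarith)
        gcongr
        exact hsum.sum_le_tsum _ fun i _ => hw i
    _ ≤ _ := hg.sum_le_tsum _ fun k _ => mul_nonneg (hΓ _) (by positivity)

theorem exists_nonneg_forall_sum_powerset_mul_prod_le {Γ y : ℕ → ℝ} {a Ca q : ℝ}
    (hΓnn : ∀ k, 0 ≤ Γ k) (hΓ : ∀ k : ℕ, Γ k ≤ Ca * (k ! : ℝ) ^ a) (hy : ∀ i, 0 ≤ y i)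
    (hq : 1 ≤ q) (hsum : Summable fun i => y i ^ (1 / q))
    (h : a < q ∨ (a = q ∧ ∑' i, y i ^ (1 / q) < 1)) :
    ∃ S, 0 ≤ S ∧ ∀ s : Finset ℕ, ∑ v ∈ s.powerset, Γ (#v + 1) * ∏ i ∈ v, y i ≤ S := by
  have hT : 0 ≤ ∑' i, y i ^ (1 / q) := tsum_nonneg fun i => Real.rpow_nonneg (hy i) _
  exact ⟨_, tsum_nonneg fun k => mul_nonneg (hΓnn _) (by positivity),
    sum_powerset_mul_prod_le_tsum hΓnn hy hq hsum
      (summable_mul_pow_div_factorial_rpow hΓnn hΓ (by linarith) hT h)⟩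

theorem exists_lt_summable_rpow_of_ofReal_lt_decay {V : Type*} {f : V → ℝ} {a : ℝ}
    (h : ENNReal.ofReal a < decay f) : ∃ t, a < t ∧ Summable fun v => f v ^ (1 / t) := by
  obtain ⟨t, ht⟩ := lt_iSup_iff.1 h
  obtain ⟨⟨ht0, hsum⟩, hat⟩ := lt_iSup_iff.1 ht
  exact ⟨t, (ENNReal.ofReal_lt_ofReal_iff ht0).1 hat, hsum⟩

theorem exists_one_le_lt_summable_mul_rpow {β : ℕ → ℝ} {a x : ℝ} (hx : 0 ≤ x)
    (hβ : ∀ i, 0 ≤ β i) (hlt : ENNReal.ofReal a < decay β) (hs : Summable β) :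
    ∃ q, 1 ≤ q ∧ a < q ∧ Summable fun i => (x * β i) ^ (1 / q) := by
  obtain ⟨t, hat, ht⟩ := exists_lt_summable_rpow_of_ofReal_lt_decay hlt
  rcases le_or_gt 1 t with h1t | ht1
  · refine ⟨t, h1t, hat, ?_⟩
    simp_rw [Real.mul_rpow hx (hβ _)]
    exact ht.mul_left _
  · exact ⟨1, le_rfl, hat.trans ht1, by simpa using hs.mul_left x⟩

theorem stmt16_general (C : ℝ) (γseq : ℕ → ℝ) (Γ : ℕ → ℝ) (a Ca : ℝ)
    (hnn : ∀ j, 0 ≤ γseq j) (hΓnn : ∀ k, 0 ≤ Γ k)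
    (hΓ : ∀ k : ℕ, Γ k ≤ Ca * (k.factorial : ℝ) ^ a)
    (γ : Finset ℕ → ℝ) (hγ : ∀ u, γ u = Γ u.card * ∏ j ∈ u, γseq j) :
    -- (i)
    (∀ j : ℕ,
      C ^ 2 * Γ 1 * γseq j ≤
        ∑ u ∈ (Finset.range (j + 1)).powerset.filter (fun u => j ∈ u),
          C ^ (2 * u.card) * γ u) ∧
    -- (ii)
    (((ENNReal.ofReal a < decay γseq ∧ Summable γseq) ∨
      (decay γseq = ENNReal.ofReal a ∧ 1 ≤ a ∧
        (Summable fun j : ℕ => (C ^ 2 * γseq j) ^ (1 / a)) ∧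
        (∑' j : ℕ, (C ^ 2 * γseq j) ^ (1 / a)) < 1)) →
      ∃ c : ℝ, 0 < c ∧ ∀ j : ℕ,
        (∑ u ∈ (Finset.range (j + 1)).powerset.filter (fun u => j ∈ u),
          C ^ (2 * u.card) * γ u) ≤ c * γseq j) := by
  have hy : ∀ i, 0 ≤ C ^ 2 * γseq i := fun i => by have := hnn i; positivity
  set D : ℕ → ℝ := fun j => ∑ v ∈ (range j).powerset, Γ (#v + 1) * ∏ i ∈ v, C ^ 2 * γseq i
  have hsplit : ∀ j, ∑ u ∈ (range (j + 1)).powerset.filter (fun u => j ∈ u),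
      C ^ (2 * #u) * γ u = C ^ 2 * γseq j * D j := fun j => by
    simp only [pow_mul]
    exact sum_pow_card_mul_pod_eq (C ^ 2) Γ γseq γ hγ j
  refine ⟨fun j => ?_, fun h => ?_⟩
  · have hD : Γ 1 ≤ D j := by
      simpa using single_le_sum (f := fun v => Γ (#v + 1) * ∏ i ∈ v, C ^ 2 * γseq i)
        (fun v _ => mul_nonneg (hΓnn _) (prod_nonneg fun i _ => hy i)) (empty_mem_powerset _)
    rw [hsplit, mul_right_comm]
    exact mul_le_mul_of_nonneg_left hD (hy j)
  obtain ⟨q, hq, hsum, hcase⟩ : ∃ q, 1 ≤ q ∧ Summable (fun i => (C ^ 2 * γseq i) ^ (1 / q)) ∧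
      (a < q ∨ (a = q ∧ ∑' i, (C ^ 2 * γseq i) ^ (1 / q) < 1)) := by
    rcases h with ⟨hlt, hs⟩ | ⟨-, ha1, hsum, htsum⟩
    · obtain ⟨q, hq, haq, hsum⟩ := exists_one_le_lt_summable_mul_rpow (sq_nonneg C) hnn hlt hs
      exact ⟨q, hq, hsum, Or.inl haq⟩
    · exact ⟨a, ha1, hsum, Or.inr ⟨rfl, htsum⟩⟩
  obtain ⟨S, hS, hDS⟩ := exists_nonneg_forall_sum_powerset_mul_prod_le hΓnn hΓ hy hq hsum hcase
  refine ⟨C ^ 2 * S + 1, by positivity, fun j => ?_⟩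
  calc _ = C ^ 2 * γseq j * D j := hsplit j
    _ ≤ C ^ 2 * γseq j * S := mul_le_mul_of_nonneg_left (hDS _) (hy j)
    _ ≤ (C ^ 2 * S + 1) * γseq j := by nlinarith [hnn j]

theorem stmt16 (C : ℝ) (hC : 0 < C) (γseq : ℕ → ℝ) (Γ : ℕ → ℝ) (a Ca : ℝ)
    (hmono : Antitone γseq) (hnn : ∀ j, 0 ≤ γseq j) (hΓnn : ∀ k, 0 ≤ Γ k)
    (ha : 0 < a) (hCa : 0 < Ca) (hΓ : ∀ k : ℕ, Γ k ≤ Ca * (k.factorial : ℝ) ^ a)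
    (γ : Finset ℕ → ℝ) (hγ : ∀ u, γ u = Γ u.card * ∏ j ∈ u, γseq j) :
    -- (i)
    (∀ j : ℕ,
      C ^ 2 * Γ 1 * γseq j ≤
        ∑ u ∈ (Finset.range (j + 1)).powerset.filter (fun u => j ∈ u),
          C ^ (2 * u.card) * γ u) ∧
    -- (ii)
    (((ENNReal.ofReal a < decay γseq ∧ Summable γseq) ∨
      (decay γseq = ENNReal.ofReal a ∧ 1 ≤ a ∧
        (Summable fun j : ℕ => (C ^ 2 * γseq j) ^ (1 / a)) ∧
        (∑' j : ℕ, (C ^ 2 * γseq j) ^ (1 / a)) < 1)) →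
      ∃ c : ℝ, 0 < c ∧ ∀ j : ℕ,
        (∑ u ∈ (Finset.range (j + 1)).powerset.filter (fun u => j ∈ u),
          C ^ (2 * u.card) * γ u) ≤ c * γseq j) :=
  stmt16_general C γseq Γ a Ca hnn hΓnn hΓ γ hγ
end

section
/- Let C > 0 and let γ be product weights, γ_u = Π_{j ∈ u} γ_j, with (γ_j)_{j ∈ ℕ} non-increasing and non-negative. (i) If Σ_{v ∈ 𝒰} C^{2|v|} γ_v < ∞, then with η_u := C^{2|u|} γ_u and c := Π_{j ∈ ℕ} (1 + C² γ_j) ∈ [1, ∞) one has η_u ≤ (T↑ γ)_u ≤ c η_u for every u ∈ 𝒰, where (T↑ γ)_u := Σ_{v ∈ 𝒰, u ⊆ v} C^{2|v|} γ_v; moreover Σ_{v} C^{2|v|} η_v < ∞. (ii) If γ is completely monotone (equivalently, 0 ≤ γ_j ≤ 1 for all j), then with ζ_u := C^{−2|u|} γ_u and c' := Π_{j ∈ ℕ} (1 − γ_j) ∈ [0, 1] one has c' ζ_u ≤ (T↓ γ)_u ≤ ζ_u for every u ∈ 𝒰, where (T↓ γ)_u := C^{−2|u|} lim_{s → ∞}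 (Δ_{[s] ∖ u} γ)_u; furthermore Σ_{v} C^{2|v|} ζ_v < ∞ if and only if Σ_{v} C^{2|v|} γ_v < ∞. -/
/-!
For product weights everything factorises. With `g j := C² γ_j` one has `C^{2|v|} γ_v = ∏_{j∈v} g j`,
which for `u ⊆ v` equals `η_u · η_{v∖u}`; since `v ↦ v ∖ u` is injective on the supersets of `u`,
`(T↑γ)_u ≤ η_u · ∑'_w η_w`, and `∑'_w η_w = ∏'_j (1 + g j) = c` by expanding the product.
Summability of `w ↦ ∏_{j∈w} g j` is equivalent to summability of `g` (compare with `exp (∑ g)`).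
For (ii), `(Δ_{[s]∖u} γ)_u = γ_u ∏_{j∈[s]∖u} (1 - γ_j)`, and these partial products decrease
from `1` and stay above their infimum `c'`, so the limit lies between `c' γ_u` and `γ_u`.
-/

open Finset Filter Topology

section FinsetProd

variable {ι : Type*} {g : ι → ℝ}

theorem summable_finsetProd_iff (hg : ∀ i, 0 ≤ g i) :
    Summable (∏ i ∈ ·, g i) ↔ Summable g := by
  refine ⟨fun h => ?_, summable_finsetProd_of_summable_nonneg hg⟩
  exact (h.comp_injective singleton_injective).congr fun i => prod_singleton g i

theorem one_le_tprod_one_add (hg : ∀ i, 0 ≤ g i) (h : Summable (∏ i ∈ ·, g i)) :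
    1 ≤ ∏' i, (1 + g i) := by
  rw [tprod_one_add h]
  simpa using h.le_tsum ∅ fun s _ => prod_nonneg fun i _ => hg i

variable [DecidableEq ι]

theorem prod_le_tsum_superset (hg : ∀ i, 0 ≤ g i) (h : Summable (∏ i ∈ ·, g i))
    (u : Finset ι) : ∏ i ∈ u, g i ≤ ∑' v, if u ⊆ v then ∏ i ∈ v, g i else 0 := by
  have hnonneg : ∀ v, 0 ≤ ∏ i ∈ v, g i := fun v => prod_nonneg fun i _ => hg i
  have hsum : Summable fun v => if u ⊆ v then ∏ i ∈ v, g i else 0 :=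
    h.of_nonneg_of_le (fun v => by split_ifs <;> simp [hnonneg]) fun v => by
      split_ifs <;> simp [hnonneg]
  simpa using hsum.le_tsum u fun v _ => by split_ifs <;> simp [hnonneg]

theorem tsum_superset_le_tprod_one_add_mul (hg : ∀ i, 0 ≤ g i) (h : Summable (∏ i ∈ ·, g i))
    (u : Finset ι) :
    (∑' v, if u ⊆ v then ∏ i ∈ v, g i else 0) ≤ (∏' i, (1 + g i)) * ∏ i ∈ u, g i := by
  have hsubtype : (∑' v, if u ⊆ v then ∏ i ∈ v, g i else 0) =
      ∑' v : ({v | u ⊆ v} : Set (Finset ι)), ∏ i ∈ v.1, g i := by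
    rw [_root_.tsum_subtype {v | u ⊆ v} fun v => ∏ i ∈ v, g i]
    simp only [Set.indicator_apply, Set.mem_ofPred_eq]
  have hinj : Function.Injective fun v : ({v | u ⊆ v} : Set (Finset ι)) => v.1 \ u :=
    fun v w hvw => Subtype.ext <| by
      rw [← sdiff_union_of_subset v.2, ← sdiff_union_of_subset w.2]
      exact congrArg (· ∪ u) hvw
  rw [hsubtype, tprod_one_add h, ← tsum_mul_right]
  exact Summable.tsum_le_tsum_of_inj _ hinj
    (fun w _ => mul_nonneg (prod_nonneg fun i _ => hg i) (prod_nonneg fun i _ => hg i))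
    (fun v => (prod_sdiff v.2).ge) (h.subtype _) (h.mul_right _)

end FinsetProd

section UnitIntervalProd

variable {ι : Type*} {f : ι → ℝ}

theorem hasProd_iInf_of_nonneg_of_le_one (h0 : ∀ i, 0 ≤ f i) (h1 : ∀ i, f i ≤ 1) :
    HasProd f (⨅ s : Finset ι, ∏ i ∈ s, f i) :=
  tendsto_atTop_ciInf
    (fun _ _ hst => prod_le_prod_of_subset_of_le_one hst (fun i _ => h0 i) fun i _ _ => h1 i)
    ⟨0, by rintro _ ⟨s, rfl⟩; exact prod_nonneg fun i _ => h0 i⟩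

theorem tprod_le_prod_of_nonneg_of_le_one (h0 : ∀ i, 0 ≤ f i) (h1 : ∀ i, f i ≤ 1)
    (s : Finset ι) : ∏' i, f i ≤ ∏ i ∈ s, f i := by
  rw [(hasProd_iInf_of_nonneg_of_le_one h0 h1).tprod_eq]
  exact ciInf_le ⟨0, by rintro _ ⟨s, rfl⟩; exact prod_nonneg fun i _ => h0 i⟩ s

end UnitIntervalProd

theorem Δ_prod_of_disjoint (f : ℕ → ℝ) {u v : Finset ℕ} (huv : Disjoint u v) :
    Δ v (fun w => ∏ j ∈ w, f j) u = (∏ j ∈ u, f j) * ∏ j ∈ v, (1 - f j) := by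
  simp only [Δ, sub_eq_add_neg, prod_one_add, prod_neg, mul_sum]
  refine sum_congr rfl fun w hw => ?_
  rw [prod_union (huv.mono_right (mem_powerset.1 hw))]
  ring

theorem mem_Icc_of_tendsto_Δ_prod {α : Type*} {l : Filter α} [l.NeBot] (f : ℕ → ℝ)
    (h0 : ∀ j, 0 ≤ f j) (h1 : ∀ j, f j ≤ 1) {u : Finset ℕ} {v : α → Finset ℕ}
    (huv : ∀ s, Disjoint u (v s)) {L : ℝ}
    (hL : Tendsto (fun s => Δ (v s) (fun w => ∏ j ∈ w, f j) u) l (𝓝 L)) :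
    L ∈ Set.Icc ((∏' j, (1 - f j)) * ∏ j ∈ u, f j) (∏ j ∈ u, f j) := by
  have hu : 0 ≤ ∏ j ∈ u, f j := prod_nonneg fun j _ => h0 j
  have g0 : ∀ j, 0 ≤ 1 - f j := fun j => sub_nonneg.2 (h1 j)
  have g1 : ∀ j, 1 - f j ≤ 1 := fun j => sub_le_self _ (h0 j)
  simp only [Δ_prod_of_disjoint f (huv _)] at hL
  constructor
  · refine ge_of_tendsto' hL fun s => ?_
    rw [mul_comm]
    exact mul_le_mul_of_nonneg_left (tprod_le_prod_of_nonneg_of_le_one g0 g1 _) hu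
  · exact le_of_tendsto' hL fun s =>
      mul_le_of_le_one_right hu (prod_le_one (fun j _ => g0 j) fun j _ => g1 j)

theorem stmt17_general (C : ℝ) (hC : 0 < C) (γseq : ℕ → ℝ)
    (hnn : ∀ j, 0 ≤ γseq j)
    (γ : Finset ℕ → ℝ) (hγ : ∀ u, γ u = ∏ j ∈ u, γseq j) :
    -- (i)
    ((Summable fun v : Finset ℕ => C ^ (2 * v.card) * γ v) →
      Multipliable (fun j : ℕ => 1 + C ^ 2 * γseq j) ∧
      1 ≤ ∏' j : ℕ, (1 + C ^ 2 * γseq j) ∧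
      (∀ u : Finset ℕ,
        C ^ (2 * u.card) * γ u ≤
          (∑' v : Finset ℕ, if u ⊆ v then C ^ (2 * v.card) * γ v else 0) ∧
        (∑' v : Finset ℕ, if u ⊆ v then C ^ (2 * v.card) * γ v else 0) ≤
          (∏' j : ℕ, (1 + C ^ 2 * γseq j)) * (C ^ (2 * u.card) * γ u)) ∧
      Summable fun v : Finset ℕ => C ^ (2 * v.card) * (C ^ (2 * v.card) * γ v)) ∧
    -- (ii)
    ((∀ j, γseq j ≤ 1) →
      Multipliable (fun j : ℕ => 1 - γseq j) ∧
      0 ≤ (∏' j : ℕ, (1 - γseq j)) ∧ (∏' j : ℕ, (1 - γseq j)) ≤ 1 ∧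
      (∀ Td : Finset ℕ → ℝ,
        (∀ u : Finset ℕ, Tendsto (fun s : ℕ => Δ (Finset.range s \ u) γ u) atTop
          (𝓝 (C ^ (2 * u.card) * Td u))) →
        ∀ u : Finset ℕ,
          (∏' j : ℕ, (1 - γseq j)) * ((C ^ (2 * u.card))⁻¹ * γ u) ≤ Td u ∧
          Td u ≤ (C ^ (2 * u.card))⁻¹ * γ u) ∧
      ((Summable fun v : Finset ℕ => C ^ (2 * v.card) * ((C ^ (2 * v.card))⁻¹ * γ v)) ↔
        Summable fun v : Finset ℕ => C ^ (2 * v.card) * γ v)) := by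
  obtain rfl : γ = fun u => ∏ j ∈ u, γseq j := funext hγ
  have hweight (c : ℝ) (v : Finset ℕ) :
      c ^ (2 * v.card) * ∏ j ∈ v, γseq j = ∏ j ∈ v, c ^ 2 * γseq j := by
    rw [pow_mul, pow_card_mul_prod]
  have hweight_nonneg (c : ℝ) (j : ℕ) : 0 ≤ c ^ 2 * γseq j := mul_nonneg (sq_nonneg c) (hnn j)
  have hsummable (c : ℝ) (hc : c ≠ 0) :
      (Summable fun v : Finset ℕ => c ^ (2 * v.card) * ∏ j ∈ v, γseq j) ↔ Summable γseq := by
    simp only [hweight, summable_finsetProd_iff (hweight_nonneg c),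
      summable_mul_left_iff (pow_ne_zero 2 hc)]
  refine ⟨fun h => ?_, fun h1 => ?_⟩
  · have hη : Summable (∏ j ∈ ·, C ^ 2 * γseq j) := by simpa only [hweight] using h
    refine ⟨multipliable_one_add_of_summable_prod hη, one_le_tprod_one_add (hweight_nonneg C) hη,
      fun u => ?_, ?_⟩
    · simp only [hweight]
      exact ⟨prod_le_tsum_superset (hweight_nonneg C) hη u,
        tsum_superset_le_tprod_one_add_mul (hweight_nonneg C) hη u⟩
    · exact ((hsummable (C ^ 2) (pow_ne_zero 2 hC.ne')).2 ((hsummable C hC.ne').1 h)).congr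
        fun v => by ring
  · have g0 (j : ℕ) : 0 ≤ 1 - γseq j := sub_nonneg.2 (h1 j)
    have g1 (j : ℕ) : 1 - γseq j ≤ 1 := sub_le_self _ (hnn j)
    refine ⟨(hasProd_iInf_of_nonneg_of_le_one g0 g1).multipliable, tprod_nonneg g0,
      by simpa using tprod_le_prod_of_nonneg_of_le_one g0 g1 ∅, fun Td hTd u => ?_, ?_⟩
    · obtain ⟨hlo, hhi⟩ :=
        mem_Icc_of_tendsto_Δ_prod γseq hnn h1 (fun _ => disjoint_sdiff) (hTd u)
      have hCu : 0 < C ^ (2 * u.card) := pow_pos hC _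
      rw [mul_left_comm, inv_mul_le_iff₀ hCu, le_inv_mul_iff₀ hCu]
      exact ⟨hlo, hhi⟩
    · simp only [mul_inv_cancel_left₀ (pow_ne_zero _ hC.ne')]
      rw [summable_finsetProd_iff hnn, hsummable C hC.ne']

theorem stmt17 (C : ℝ) (hC : 0 < C) (γseq : ℕ → ℝ) (hmono : Antitone γseq)
    (hnn : ∀ j, 0 ≤ γseq j)
    (γ : Finset ℕ → ℝ) (hγ : ∀ u, γ u = ∏ j ∈ u, γseq j) :
    -- (i)
    ((Summable fun v : Finset ℕ => C ^ (2 * v.card) * γ v) →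
      Multipliable (fun j : ℕ => 1 + C ^ 2 * γseq j) ∧
      1 ≤ ∏' j : ℕ, (1 + C ^ 2 * γseq j) ∧
      (∀ u : Finset ℕ,
        C ^ (2 * u.card) * γ u ≤
          (∑' v : Finset ℕ, if u ⊆ v then C ^ (2 * v.card) * γ v else 0) ∧
        (∑' v : Finset ℕ, if u ⊆ v then C ^ (2 * v.card) * γ v else 0) ≤
          (∏' j : ℕ, (1 + C ^ 2 * γseq j)) * (C ^ (2 * u.card) * γ u)) ∧
      Summable fun v : Finset ℕ => C ^ (2 * v.card) * (C ^ (2 * v.card) * γ v)) ∧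
    -- (ii)
    ((∀ j, γseq j ≤ 1) →
      Multipliable (fun j : ℕ => 1 - γseq j) ∧
      0 ≤ (∏' j : ℕ, (1 - γseq j)) ∧ (∏' j : ℕ, (1 - γseq j)) ≤ 1 ∧
      (∀ Td : Finset ℕ → ℝ,
        (∀ u : Finset ℕ, Tendsto (fun s : ℕ => Δ (Finset.range s \ u) γ u) atTop
          (𝓝 (C ^ (2 * u.card) * Td u))) →
        ∀ u : Finset ℕ,
          (∏' j : ℕ, (1 - γseq j)) * ((C ^ (2 * u.card))⁻¹ * γ u) ≤ Td u ∧
          Td u ≤ (C ^ (2 * u.card))⁻¹ * γ u) ∧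
      ((Summable fun v : Finset ℕ => C ^ (2 * v.card) * ((C ^ (2 * v.card))⁻¹ * γ v)) ↔
        Summable fun v : Finset ℕ => C ^ (2 * v.card) * γ v)) :=
  stmt17_general C hC γseq hnn γ hγ
end

section
/- Let C > 0 and let γ be POD weights, γ_u = Γ_{|u|} Π_{j ∈ u} γ_j, with (γ_j) non-increasing and non-negative and 0 ≤ Γ_k ≤ C_a (k!)^a for constants a, C_a > 0. Put c := Σ_{w ∈ 𝒰} (|w|!)^a Π_{j ∈ w} (2^a C² γ_j) ∈ [1, ∞]. (i) If Σ_{v ∈ 𝒰} C^{2|v|} γ_v < ∞, then η ≤ T↑ γ ≤ c ξ pointwise, where (T↑ γ)_u := Σ_{v ∈ 𝒰, u ⊆ v} C^{2|v|} γ_v, η_u := C^{2|u|} γ_u, and ξ_u := C_a (|u|!)^a Π_{j ∈ u} (2^a C² γ_j). (ii) If γ is completely monotone, then 0 ≤ (T↓ γ)_u ≤ C^{−2|u|} γ_u for every u ∈ 𝒰, where (T↓ γ)_u := C^{−2|u|} lim_{s → ∞} (Δ_{[s] ∖ u} γ)_u. -/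
/-!
(i) The lower bound is the term `v = u` of `T↑ γ`. For the upper bound write `v = u ⊔ w`;
since `binom(|u|+|w|, |u|) ≤ 2^{|u|+|w|}`, the factorial growth of `Γ` gives `η_v ≤ ξ_u ρ_w`
with `ρ_w := (|w|!)^a Π_{j ∈ w} 2^a C² γ_j`, and `v ↦ v \ u` is injective on supersets of `u`,
so summing over `v` yields at most `ξ_u Σ_w ρ_w = c ξ_u`.

(ii) `Δ_{v ∪ {j}} γ_u = Δ_v γ_u − Δ_v γ_{u ∪ {j}}`, so for completely monotone `γ` the
sequence `s ↦ (Δ_{[s] \ u} γ)_u` is non-increasing, non-negative, and starts at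
`(Δ_∅ γ)_u = γ_u`.
-/

open Finset Filter Topology

open scoped ENNReal Nat

section Difference

variable (γ : Finset ℕ → ℝ)

theorem Δ_empty (u : Finset ℕ) : Δ ∅ γ u = γ u := by
  simp [Δ]

theorem Δ_insert {j : ℕ} {v : Finset ℕ} (hj : j ∉ v) (u : Finset ℕ) :
    Δ (insert j v) γ u = Δ v γ u - Δ v γ (insert j u) := by
  unfold Δ
  rw [sum_powerset_insert hj, sub_eq_add_neg, ← sum_neg_distrib]
  congr 1
  refine sum_congr rfl fun w hw => ?_
  have hjw : j ∉ w := fun h => hj (mem_powerset.mp hw h)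
  rw [card_insert_of_notMem hjw, union_insert, ← insert_union, pow_succ]
  ring

variable {γ}

theorem antitone_Δ_range_sdiff (hγ : ∀ v u, 0 ≤ Δ v γ u) (u : Finset ℕ) :
    Antitone fun s : ℕ => Δ (range s \ u) γ u := by
  refine antitone_nat_of_succ_le fun s => ?_
  by_cases hs : s ∈ u
  · rw [range_add_one, insert_sdiff_of_mem _ hs]
  · have hsn : s ∉ range s \ u := by simp
    rw [range_add_one, insert_sdiff_of_notMem _ hs, Δ_insert γ hsn]
    linarith [hγ (range s \ u) (insert s u)]

theorem limit_Δ_range_sdiff_mem_Icc (hγ : ∀ v u, 0 ≤ Δ v γ u) {u : Finset ℕ} {L : ℝ}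
    (hL : Tendsto (fun s : ℕ => Δ (range s \ u) γ u) atTop (𝓝 L)) :
    L ∈ Set.Icc 0 (γ u) := by
  refine ⟨ge_of_tendsto' hL fun s => hγ _ _, le_of_tendsto' hL fun s => ?_⟩
  simpa [Δ_empty] using antitone_Δ_range_sdiff hγ u (Nat.zero_le s)

end Difference

theorem Nat.factorial_add_le_two_pow_mul (m n : ℕ) :
    (m + n)! ≤ 2 ^ (m + n) * m ! * n ! := by
  calc (m + n)! = (m + n).choose m * m ! * n ! := by
        rw [← Nat.choose_mul_factorial_mul_factorial (Nat.le_add_right m n),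
          Nat.add_sub_cancel_left]
    _ ≤ 2 ^ (m + n) * m ! * n ! := by
        gcongr
        exact Nat.choose_le_two_pow _ _

theorem Real.factorial_add_rpow_le {a : ℝ} (ha : 0 ≤ a) (m n : ℕ) :
    ((m + n)! : ℝ) ^ a ≤ ((2 : ℝ) ^ a) ^ (m + n) * (m ! : ℝ) ^ a * (n ! : ℝ) ^ a := by
  calc ((m + n)! : ℝ) ^ a ≤ ((2 ^ (m + n) * m ! * n ! : ℕ) : ℝ) ^ a := by
        gcongr
        exact_mod_cast Nat.factorial_add_le_two_pow_mul m n
    _ = _ := by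
        push_cast
        rw [Real.mul_rpow (by positivity) (by positivity),
          Real.mul_rpow (by positivity) (by positivity), ← Real.rpow_pow_comm (by norm_num)]

section POD

variable (a C : ℝ) (γseq : ℕ → ℝ)

/-- `ρ_w` of the sketch above: `c = Σ_w ρ_w` and `ξ_u = C_a ρ_u`. -/
noncomputable def podMajorant (w : Finset ℕ) : ℝ :=
  (w.card ! : ℝ) ^ a * ∏ j ∈ w, ((2 : ℝ) ^ a * C ^ 2 * γseq j)

variable {a C γseq}

theorem podMajorant_nonneg (hnn : ∀ j, 0 ≤ γseq j) (w : Finset ℕ) :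
    0 ≤ podMajorant a C γseq w :=
  mul_nonneg (by positivity) (prod_nonneg fun j _ => mul_nonneg (by positivity) (hnn j))

theorem pod_union_le_mul_podMajorant {Ca : ℝ} {Γ : ℕ → ℝ} (ha : 0 ≤ a) (hCa : 0 ≤ Ca)
    (hnn : ∀ j, 0 ≤ γseq j) (hΓ : ∀ k : ℕ, Γ k ≤ Ca * (k ! : ℝ) ^ a)
    {u w : Finset ℕ} (huw : Disjoint u w) :
    C ^ (2 * (u ∪ w).card) * (Γ (u ∪ w).card * ∏ j ∈ u ∪ w, γseq j) ≤
      Ca * podMajorant a C γseq u * podMajorant a C γseq w := by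
  have hprod : ∏ j ∈ u ∪ w, ((2 : ℝ) ^ a * C ^ 2 * γseq j) =
      ((2 : ℝ) ^ a) ^ (u ∪ w).card * C ^ (2 * (u ∪ w).card) * ∏ j ∈ u ∪ w, γseq j := by
    rw [prod_mul_distrib, prod_mul_distrib, prod_const, prod_const, pow_mul]
  have hP : 0 ≤ C ^ (2 * (u ∪ w).card) * ∏ j ∈ u ∪ w, γseq j :=
    mul_nonneg ((even_two_mul _).pow_nonneg C) (prod_nonneg fun j _ => hnn j)
  rw [card_union_of_disjoint huw] at hprod hP ⊢
  calc C ^ (2 * (#u + #w)) * (Γ (#u + #w) * ∏ j ∈ u ∪ w, γseq j)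
      = Γ (#u + #w) * (C ^ (2 * (#u + #w)) * ∏ j ∈ u ∪ w, γseq j) := by ring
    _ ≤ Ca * ((#u + #w)! : ℝ) ^ a * (C ^ (2 * (#u + #w)) * ∏ j ∈ u ∪ w, γseq j) := by
        gcongr
        exact hΓ _
    _ ≤ Ca * (((2 : ℝ) ^ a) ^ (#u + #w) * ((#u)! : ℝ) ^ a * ((#w)! : ℝ) ^ a) *
          (C ^ (2 * (#u + #w)) * ∏ j ∈ u ∪ w, γseq j) := by
        gcongr
        exact Real.factorial_add_rpow_le ha _ _
    _ = Ca * podMajorant a C γseq u * podMajorant a C γseq w := by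
        have hsplit := prod_union huw (f := fun j => (2 : ℝ) ^ a * C ^ 2 * γseq j)
        rw [hprod] at hsplit
        rw [podMajorant, podMajorant]
        linear_combination (Ca * ((#u)! : ℝ) ^ a * ((#w)! : ℝ) ^ a) * hsplit

end POD

theorem ENNReal.tsum_ite_subset_le {α : Type*} [DecidableEq α] (u : Finset α)
    {f g : Finset α → ℝ≥0∞} (h : ∀ w, Disjoint u w → f (u ∪ w) ≤ g w) :
    ∑' v, (if u ⊆ v then f v else 0) ≤ ∑' w, g w :=
  calc ∑' v, (if u ⊆ v then f v else 0) = ∑' v : {v | u ⊆ v}, f v := by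
        rw [_root_.tsum_subtype]
        exact tsum_congr fun v => by simp [Set.indicator_apply]
    _ ≤ ∑' v : {v | u ⊆ v}, g (v.1 \ u) := ENNReal.tsum_le_tsum fun v => by
        simpa [union_sdiff_of_subset v.2] using h (v.1 \ u) disjoint_sdiff
    _ ≤ ∑' w, g w := ENNReal.tsum_comp_le_tsum_of_injective (superset_injOn_sdiff u).injective g

theorem summable_ite_subset {α : Type*} [DecidableEq α] {f : Finset α → ℝ} (hf : Summable f)
    (hf0 : ∀ v, 0 ≤ f v) (u : Finset α) : Summable fun v => if u ⊆ v then f v else 0 :=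
  hf.of_nonneg_of_le (fun v => by split_ifs <;> simp [hf0]) fun v => by split_ifs <;> simp [hf0]

theorem stmt18_general (C : ℝ) (hC : 0 < C) (γseq : ℕ → ℝ) (Γ : ℕ → ℝ) (a Ca : ℝ)
    (hnn : ∀ j, 0 ≤ γseq j) (hΓnn : ∀ k, 0 ≤ Γ k)
    (ha : 0 < a) (hCa : 0 < Ca) (hΓ : ∀ k : ℕ, Γ k ≤ Ca * (k.factorial : ℝ) ^ a)
    (γ : Finset ℕ → ℝ) (hγ : ∀ u, γ u = Γ u.card * ∏ j ∈ u, γseq j)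
    (c : ENNReal)
    (hc : c = ∑' w : Finset ℕ,
      ENNReal.ofReal ((w.card.factorial : ℝ) ^ a * ∏ j ∈ w, ((2 : ℝ) ^ a * C ^ 2 * γseq j))) :
    -- c ∈ [1, ∞]
    1 ≤ c ∧
    -- (i)
    ((Summable fun v : Finset ℕ => C ^ (2 * v.card) * γ v) →
      ∀ u : Finset ℕ,
        C ^ (2 * u.card) * γ u ≤
          (∑' v : Finset ℕ, if u ⊆ v then C ^ (2 * v.card) * γ v else 0) ∧
        ENNReal.ofReal (∑' v : Finset ℕ, if u ⊆ v then C ^ (2 * v.card) * γ v else 0) ≤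
          c * ENNReal.ofReal
            (Ca * (u.card.factorial : ℝ) ^ a * ∏ j ∈ u, ((2 : ℝ) ^ a * C ^ 2 * γseq j))) ∧
    -- (ii)
    ((∀ v u : Finset ℕ, 0 ≤ Δ v γ u) →
      ∀ Td : Finset ℕ → ℝ,
        (∀ u : Finset ℕ, Tendsto (fun s : ℕ => Δ (Finset.range s \ u) γ u) atTop
          (𝓝 (C ^ (2 * u.card) * Td u))) →
        ∀ u : Finset ℕ, 0 ≤ Td u ∧ Td u ≤ (C ^ (2 * u.card))⁻¹ * γ u) := by
  have hη : ∀ v, 0 ≤ C ^ (2 * v.card) * γ v := fun v => by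
    rw [hγ]
    exact mul_nonneg (by positivity) (mul_nonneg (hΓnn _) (prod_nonneg fun j _ => hnn j))
  replace hc : c = ∑' w, ENNReal.ofReal (podMajorant a C γseq w) := hc
  refine ⟨?_, fun hsum u => ?_, fun hcm Td hTd u => ?_⟩
  · calc 1 = ENNReal.ofReal (podMajorant a C γseq ∅) := by simp [podMajorant]
      _ ≤ c := hc ▸ ENNReal.le_tsum _
  · have htail := summable_ite_subset hsum hη u
    refine ⟨by simpa using htail.le_tsum u fun v _ => by split_ifs <;> simp [hη], ?_⟩
    rw [ENNReal.ofReal_tsum_of_nonneg (fun v => by split_ifs <;> simp [hη]) htail]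
    calc ∑' v, ENNReal.ofReal (if u ⊆ v then C ^ (2 * v.card) * γ v else 0)
        = ∑' v, if u ⊆ v then ENNReal.ofReal (C ^ (2 * v.card) * γ v) else 0 := by
          simp only [apply_ite ENNReal.ofReal, ENNReal.ofReal_zero]
      _ ≤ ∑' w, ENNReal.ofReal (Ca * podMajorant a C γseq u) *
            ENNReal.ofReal (podMajorant a C γseq w) :=
          ENNReal.tsum_ite_subset_le u fun w huw => by
            rw [← ENNReal.ofReal_mul (mul_nonneg hCa.le (podMajorant_nonneg hnn u)), hγ]
            exact ENNReal.ofReal_le_ofReal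
              (pod_union_le_mul_podMajorant ha.le hCa.le hnn hΓ huw)
      _ = _ := by
          rw [ENNReal.tsum_mul_left, hc, mul_comm, podMajorant, mul_assoc]
  · obtain ⟨hlo, hhi⟩ := limit_Δ_range_sdiff_mem_Icc hcm (hTd u)
    have hpow : 0 < C ^ (2 * u.card) := pow_pos hC _
    refine ⟨(mul_nonneg_iff_of_pos_left hpow).mp hlo, ?_⟩
    rw [inv_mul_eq_div, le_div_iff₀ hpow, mul_comm]
    exact hhi

theorem stmt18 (C : ℝ) (hC : 0 < C) (γseq : ℕ → ℝ) (Γ : ℕ → ℝ) (a Ca : ℝ)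
    (hmono : Antitone γseq) (hnn : ∀ j, 0 ≤ γseq j) (hΓnn : ∀ k, 0 ≤ Γ k)
    (ha : 0 < a) (hCa : 0 < Ca) (hΓ : ∀ k : ℕ, Γ k ≤ Ca * (k.factorial : ℝ) ^ a)
    (γ : Finset ℕ → ℝ) (hγ : ∀ u, γ u = Γ u.card * ∏ j ∈ u, γseq j)
    (c : ENNReal)
    (hc : c = ∑' w : Finset ℕ,
      ENNReal.ofReal ((w.card.factorial : ℝ) ^ a * ∏ j ∈ w, ((2 : ℝ) ^ a * C ^ 2 * γseq j))) :
    -- c ∈ [1, ∞]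
    1 ≤ c ∧
    -- (i)
    ((Summable fun v : Finset ℕ => C ^ (2 * v.card) * γ v) →
      ∀ u : Finset ℕ,
        C ^ (2 * u.card) * γ u ≤
          (∑' v : Finset ℕ, if u ⊆ v then C ^ (2 * v.card) * γ v else 0) ∧
        ENNReal.ofReal (∑' v : Finset ℕ, if u ⊆ v then C ^ (2 * v.card) * γ v else 0) ≤
          c * ENNReal.ofReal
            (Ca * (u.card.factorial : ℝ) ^ a * ∏ j ∈ u, ((2 : ℝ) ^ a * C ^ 2 * γseq j))) ∧
    -- (ii)
    ((∀ v u : Finset ℕ, 0 ≤ Δ v γ u) →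
      ∀ Td : Finset ℕ → ℝ,
        (∀ u : Finset ℕ, Tendsto (fun s : ℕ => Δ (Finset.range s \ u) γ u) atTop
          (𝓝 (C ^ (2 * u.card) * Td u))) →
        ∀ u : Finset ℕ, 0 ≤ Td u ∧ Td u ≤ (C ^ (2 * u.card))⁻¹ * γ u) :=
  stmt18_general C hC γseq Γ a Ca hnn hΓnn ha hCa hΓ γ hγ c hc
end
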